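/- For every positive integer m, the polynomial h(z) = 2·∑_{k=0}^{m-1} (A_{m-1-k}/A_m)·z^k, where A_j = ∏_{i=1}^{j} (2i-1)/(2i) (with A_0 = 1), satisfies h(0) = 4m/(2m-1), h(1) = 4m, and h'(1) = (8/3)·m·(m-1). -/

import Mathlib

/-!
Both `h(1)` and `h'(1)` are, after reversing the summation index, weighted sums
`∑_{j<m} A_j` and `∑_{j<m} (m-1-j) A_j`. Since `A_{j+1} = A_j (2j+1)/(2j+2)`, these satisfy the
closed forms `2m A_m` and `(4/3) m (m-1) A_m`, each verified by induction on `m`; `h(0)` is the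
single ratio `2 A_{m-1}/A_m`.
-/

open Finset

noncomputable def wallisProd (j : ℕ) : ℝ := ∏ i ∈ Icc 1 j, (2 * (i : ℝ) - 1) / (2 * i)

lemma wallisProd_pos (j : ℕ) : 0 < wallisProd j := by
  refine prod_pos fun i hi => ?_
  have hi : (1 : ℝ) ≤ i := by exact_mod_cast (mem_Icc.mp hi).1
  apply div_pos <;> linarith

lemma wallisProd_succ (j : ℕ) :
    wallisProd (j + 1) = wallisProd j * ((2 * j + 1) / (2 * j + 2)) := by
  rw [wallisProd, prod_Icc_succ_top (by omega), ← wallisProd]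
  push_cast
  ring_nf

lemma sum_range_wallisProd (m : ℕ) : ∑ j ∈ range m, wallisProd j = 2 * m * wallisProd m := by
  induction m with
  | zero => simp
  | succ n ih =>
    rw [sum_range_succ, ih, wallisProd_succ]
    field_simp
    push_cast
    ring

lemma sum_range_sub_mul_wallisProd (m : ℕ) :
    ∑ j ∈ range m, ((m : ℝ) - 1 - j) * wallisProd j = 4 / 3 * m * (m - 1) * wallisProd m := by
  induction m with
  | zero => simp
  | succ n ih =>
    have split : ∑ j ∈ range (n + 1), ((n + 1 : ℕ) - 1 - (j : ℝ)) * wallisProd j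
        = ∑ j ∈ range n, ((n : ℝ) - 1 - j) * wallisProd j + ∑ j ∈ range n, wallisProd j := by
      rw [sum_range_succ, ← sum_add_distrib]
      push_cast
      simp only [add_sub_cancel_right, sub_self, zero_mul, add_zero]
      exact sum_congr rfl fun j _ => by ring
    rw [split, ih, sum_range_wallisProd, wallisProd_succ]
    field_simp
    push_cast
    ring

lemma sum_range_reflect_natCast_mul (f : ℕ → ℝ) (m : ℕ) :
    ∑ k ∈ range m, (k : ℝ) * f (m - 1 - k) = ∑ j ∈ range m, ((m : ℝ) - 1 - j) * f j := by
  rw [← sum_range_reflect]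
  refine sum_congr rfl fun j hj => ?_
  have hj := mem_range.mp hj
  rw [Nat.sub_sub_self (by omega), Nat.cast_sub (by omega), Nat.cast_sub (by omega)]
  simp

lemma hasDerivAt_sum_mul_pow {𝕜 : Type*} [NontriviallyNormedField 𝕜] (c : ℕ → 𝕜) (n : ℕ)
    (x : 𝕜) :
    HasDerivAt (fun z => ∑ k ∈ range n, c k * z ^ k) (∑ k ∈ range n, c k * (k * x ^ (k - 1))) x :=
  HasDerivAt.fun_sum fun k _ => (hasDerivAt_pow k x).const_mul (c k)

noncomputable def limitPoly (m : ℕ) (z : ℝ) : ℝ :=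
  2 * ∑ k ∈ range m, (wallisProd (m - 1 - k) / wallisProd m) * z ^ k

lemma limitPoly_zero (m : ℕ) : limitPoly m 0 = 4 * m / (2 * m - 1) := by
  cases m with
  | zero => simp [limitPoly]
  | succ n =>
    have hA := (wallisProd_pos n).ne'
    have hn : (2 * n + 1 : ℝ) ≠ 0 := by positivity
    simp only [limitPoly, sum_range_succ', ne_eq, Nat.add_one_ne_zero, not_false_eq_true,
      zero_pow, mul_zero, sum_const_zero, pow_zero, mul_one, zero_add, add_tsub_cancel_right,
      tsub_zero, wallisProd_succ]
    push_cast
    rw [show 2 * ((n : ℝ) + 1) - 1 = 2 * n + 1 by ring]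
    field_simp
    ring

lemma limitPoly_one (m : ℕ) : limitPoly m 1 = 4 * m := by
  have hA := (wallisProd_pos m).ne'
  simp only [limitPoly, one_pow, mul_one]
  rw [← sum_div, sum_range_reflect (fun j => wallisProd j) m, sum_range_wallisProd]
  field_simp
  ring

lemma deriv_limitPoly_one (m : ℕ) : deriv (limitPoly m) 1 = 8 / 3 * m * (m - 1) := by
  have hA := (wallisProd_pos m).ne'
  have hderiv : HasDerivAt (limitPoly m) _ 1 :=
    (hasDerivAt_sum_mul_pow (fun k => wallisProd (m - 1 - k) / wallisProd m) m 1).const_mul 2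
  rw [hderiv.deriv]
  simp only [one_pow, mul_one, ← mul_div_right_comm, mul_comm (wallisProd _), ← sum_div,
    sum_range_reflect_natCast_mul, sum_range_sub_mul_wallisProd]
  field_simp
  ring

theorem limit_polynomial_values (m : ℕ)
    (A : ℕ → ℝ)
    (hA : ∀ j, A j = ∏ i ∈ Finset.Icc 1 j, (2 * (i : ℝ) - 1) / (2 * (i : ℝ)))
    (h : ℝ → ℝ)
    (hh : ∀ z, h z = 2 * ∑ k ∈ Finset.range m, (A (m - 1 - k) / A m) * z ^ k) :
    h 0 = 4 * m / (2 * m - 1) ∧ h 1 = 4 * m ∧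
      deriv h 1 = (8/3) * m * ((m : ℝ) - 1) := by
  obtain rfl : A = wallisProd := funext hA
  obtain rfl : h = limitPoly m := funext hh
  exact ⟨limitPoly_zero m, limitPoly_one m, deriv_limitPoly_one m⟩
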